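/- Let m, n ∈ ℕ with n < m and st_+(K_n) = st_+(K_m), and let 𝒞 be an optimal set-join cover of K_m. Then every component K ∈ V(𝒞) satisfies |K| > m − n. -/

import Mathlib

open Matrix

/-- A finite simple undirected graph that allows loops: a symmetric adjacency
relation on the vertex type. -/
structure LGraph (V : Type*) where
  /-- the adjacency relation; `Adj v v` means a loop at `v`. -/
  Adj : V → V → Prop
  /-- adjacency is symmetric -/
  symm : ∀ {u v : V}, Adj u v → Adj v u

namespace LGraph

variable {V W : Type*}

/-- `𝒞` is a set-join cover of `G`: all components are nonempty subsets of the
vertex set, and the union of the edge sets of the set-joins `K ∨ L` in `𝒞` is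
exactly the edge set of `G`. A set-join is represented as an unordered pair
`s(K, L)` of subsets of the vertex set. -/
def IsSetJoinCover (G : LGraph V) (𝒞 : Set (Sym2 (Set V))) : Prop :=
  (∀ p ∈ 𝒞, ∀ K ∈ p, (K : Set V).Nonempty) ∧
    ∀ u v : V, G.Adj u v ↔ ∃ p ∈ 𝒞, ∃ K L : Set V, p = s(K, L) ∧ u ∈ K ∧ v ∈ L

/-- The component set `V(𝒞)` of a set-join cover: all subsets of the vertex set
appearing as a component of some set-join in `𝒞`. -/
def comps (𝒞 : Set (Sym2 (Set V))) : Set (Set V) :=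
  {K : Set V | ∃ p ∈ 𝒞, K ∈ p}

/-- The order `|𝒞|` of a set-join cover: the number of its components. -/
noncomputable def coverOrder (𝒞 : Set (Sym2 (Set V))) : ℕ :=
  (comps 𝒞).ncard

/-- The SNT-rank `st₊(G)` of a graph: the minimal order of a set-join cover of `G`. -/
noncomputable def st (G : LGraph V) : ℕ :=
  sInf {k : ℕ | ∃ 𝒞 : Set (Sym2 (Set V)), G.IsSetJoinCover 𝒞 ∧ coverOrder 𝒞 = k}

/-- An optimal set-join cover (OSJ cover): a set-join cover of order `st₊(G)`. -/
def IsOptimalCover (G : LGraph V) (𝒞 : Set (Sym2 (Set V))) : Prop :=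
  G.IsSetJoinCover 𝒞 ∧ coverOrder 𝒞 = G.st

/-- The graph `G(𝒞)` of a set-join cover: vertices are the components, and two
components `K`, `L` are adjacent iff the set-join `K ∨ L` belongs to `𝒞`. -/
def coverGraph (𝒞 : Set (Sym2 (Set V))) : LGraph (comps 𝒞) where
  Adj K L := s((K : Set V), (L : Set V)) ∈ 𝒞
  symm := by
    intro K L h
    rwa [Sym2.eq_swap] at h

/-- The neighbourhood of a vertex (`v ∈ neighborSet v` iff `v` has a loop). -/
def neighborSet (G : LGraph V) (v : V) : Set V := {w | G.Adj v w}

/-- The induced subgraph on a set of vertices. -/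
def induce (G : LGraph V) (S : Set V) : LGraph S where
  Adj a b := G.Adj (a : V) (b : V)
  symm := by intro a b h; exact G.symm h

/-- Adjacency for the disjoint union of two graphs. -/
def disjUnionAdj (G : LGraph V) (H : LGraph W) : V ⊕ W → V ⊕ W → Prop
  | Sum.inl a, Sum.inl b => G.Adj a b
  | Sum.inr a, Sum.inr b => H.Adj a b
  | _, _ => False

/-- The disjoint union `G ∪ H` of two graphs. -/
def disjUnion (G : LGraph V) (H : LGraph W) : LGraph (V ⊕ W) where
  Adj := disjUnionAdj G H
  symm := by
    rintro (a | a) (b | b) h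
    · exact G.symm h
    · exact h.elim
    · exact h.elim
    · exact H.symm h

/-- The graph with no edges on vertex type `V`. -/
def emptyGraph (V : Type*) : LGraph V where
  Adj _ _ := False
  symm := by intro u v h; exact h

/-- Adjacency for the join of a graph with a single looped vertex `none`. -/
def joinK1ℓAdj (G : LGraph V) : Option V → Option V → Prop
  | some a, some b => G.Adj a b
  | _, _ => True

/-- The join `G ∨ K₁ˡ` of `G` with a single looped vertex (the vertex `none`). -/
def joinK1ℓ (G : LGraph V) : LGraph (Option V) where
  Adj := joinK1ℓAdj G
  symm := by
    rintro (_ | a) (_ | b) h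
    · trivial
    · trivial
    · trivial
    · exact G.symm h

/-- The complete loopless graph `Kₙ` on `Fin n`. -/
def completeGraph (n : ℕ) : LGraph (Fin n) where
  Adj i j := i ≠ j
  symm := by intro i j h; exact h.symm

/-- The path `Pₙ` on `n` vertices (no loops). -/
def pathGraph (n : ℕ) : LGraph (Fin n) where
  Adj i j := (i : ℕ) + 1 = (j : ℕ) ∨ (j : ℕ) + 1 = (i : ℕ)
  symm := by intro i j h; exact h.symm

/-- The cycle `Cₙ` on `n` vertices (no loops), for `n ≥ 3`. -/
def cycleGraph (n : ℕ) : LGraph (Fin n) where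
  Adj i j := ((i : ℕ) + 1) % n = (j : ℕ) ∨ ((j : ℕ) + 1) % n = (i : ℕ)
  symm := by intro i j h; exact h.symm

/-- Adjacency for the generalised star: the centre is `none`, and `some ⟨i, j⟩`
is the vertex at distance `j + 1` from the centre on arm `i`. -/
def genStarAdj (t : ℕ) (k : Fin t → ℕ) :
    Option ((i : Fin t) × Fin (k i)) → Option ((i : Fin t) × Fin (k i)) → Prop
  | none, none => False
  | none, some ⟨_, j⟩ => (j : ℕ) = 0
  | some ⟨_, j⟩, none => (j : ℕ) = 0
  | some ⟨i, j⟩, some ⟨i', j'⟩ => i = i' ∧ ((j : ℕ) + 1 = (j' : ℕ) ∨ (j' : ℕ) + 1 = (j : ℕ))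

/-- The generalised star `star(k₁, …, k_t)` with central vertex `none` and `t`
arms, the `i`-th arm being a path with `k i` edges emanating from the centre. -/
def genStar (t : ℕ) (k : Fin t → ℕ) : LGraph (Option ((i : Fin t) × Fin (k i))) where
  Adj := genStarAdj t k
  symm := by
    rintro (_ | ⟨i, j⟩) (_ | ⟨i', j'⟩) h
    · exact h.elim
    · exact h
    · exact h
    · exact ⟨h.1.symm, h.2.symm⟩

/-- A loopless leaf: a vertex with exactly one neighbour and no loop. -/
def LooplessLeaf (G : LGraph V) (v : V) : Prop :=
  ¬ G.Adj v v ∧ ∃ w : V, G.neighborSet v = {w}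

/-- Delete from `G` all edges incident to the vertex `w`. -/
def deleteVertexEdges (G : LGraph V) (w : V) : LGraph V where
  Adj u v := G.Adj u v ∧ u ≠ w ∧ v ≠ w
  symm := by intro u v h; exact ⟨G.symm h.1, h.2.2, h.2.1⟩

/-- A graph is twin-free if no two distinct vertices have the same neighbourhood. -/
def TwinFree (G : LGraph V) : Prop :=
  ∀ u v : V, G.neighborSet u = G.neighborSet v → u = v

/-- `G` has a unique optimal set-join cover. -/
def HasUniqueOptimalCover (G : LGraph V) : Prop :=
  ∃! 𝒞 : Set (Sym2 (Set V)), G.IsSetJoinCover 𝒞 ∧ coverOrder 𝒞 = G.st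

/-- The cover graphs of two set-join covers are isomorphic. -/
def CoverGraphIso (𝒞 : Set (Sym2 (Set V))) (𝒟 : Set (Sym2 (Set W))) : Prop :=
  ∃ e : comps 𝒞 ≃ comps 𝒟,
    ∀ K L : comps 𝒞, (coverGraph 𝒞).Adj K L ↔ (coverGraph 𝒟).Adj (e K) (e L)

/-- All optimal set-join covers of `G` have isomorphic cover graphs. -/
def HasUniqueOSJCoverGraph (G : LGraph V) : Prop :=
  ∀ 𝒞 𝒟 : Set (Sym2 (Set V)),
    G.IsOptimalCover 𝒞 → G.IsOptimalCover 𝒟 → CoverGraphIso 𝒞 𝒟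

/-- Entrywise nonnegativity of a real matrix. -/
def EntrywiseNonneg {m n : Type*} (A : Matrix m n ℝ) : Prop :=
  ∀ i j, 0 ≤ A i j

/-- The SNT-rank `st₊(A)` of a matrix: the minimal `k` such that `A = B * C * Bᵀ`
with `B` an entrywise nonnegative `n × k` matrix and `C` a symmetric entrywise
nonnegative `k × k` matrix. -/
noncomputable def stM {V : Type*} [Fintype V] (A : Matrix V V ℝ) : ℕ :=
  sInf {k : ℕ | ∃ B : Matrix V (Fin k) ℝ, ∃ C : Matrix (Fin k) (Fin k) ℝ,
    EntrywiseNonneg B ∧ C.IsSymm ∧ EntrywiseNonneg C ∧ A = B * C * Bᵀ}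

/-- The SNT-rank `st₊(G)` of a graph defined via matrices: the minimum of
`st₊(A)` over all symmetric entrywise nonnegative matrices `A` whose pattern
graph is `G`. -/
noncomputable def stMGraph {V : Type*} [Fintype V] (G : LGraph V) : ℕ :=
  sInf {k : ℕ | ∃ A : Matrix V V ℝ, A.IsSymm ∧ EntrywiseNonneg A ∧
    (∀ i j, G.Adj i j ↔ 0 < A i j) ∧ stM A = k}

/-- The loopy graph associated with a simple graph. -/
def _root_.SimpleGraph.toLGraph (G : SimpleGraph V) : LGraph V where
  Adj := G.Adj
  symm := by intro u v h; exact G.adj_symm h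

/-- The edge star cover number `starc(G)` of a loopless simple graph: the minimal
number of stars (given by a centre and a nonempty set of leaves not containing
the centre) whose edge sets have union exactly `E(G)`. -/
noncomputable def starCoverNumber (G : SimpleGraph V) : ℕ :=
  sInf {k : ℕ | ∃ f : Fin k → V × Set V,
    (∀ i, (f i).2.Nonempty ∧ (f i).1 ∉ (f i).2) ∧
    ∀ u v : V, G.Adj u v ↔
      ∃ i, (u = (f i).1 ∧ v ∈ (f i).2) ∨ (v = (f i).1 ∧ u ∈ (f i).2)}

/-!
If some component `K` of an optimal cover of `K_m` had `|K| ≤ m - n`, its complement would contain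
`n` vertices. Restricting every set-join of the cover to these vertices gives a set-join cover of
`K_n` in which `K` has disappeared, so `st₊(K_n) < st₊(K_m)`.
-/

/-- A component missing the range of `f` pulls back to `∅`, so its set-joins are dropped. -/
def coverComap (f : V → W) (𝒟 : Set (Sym2 (Set W))) : Set (Sym2 (Set V)) :=
  Sym2.map (f ⁻¹' ·) '' {p ∈ 𝒟 | ∀ K ∈ p, (f ⁻¹' K).Nonempty}

theorem IsSetJoinCover.comap {G : LGraph W} {H : LGraph V} {𝒟 : Set (Sym2 (Set W))}
    (h : G.IsSetJoinCover 𝒟) (f : V → W) (hH : ∀ u v, H.Adj u v ↔ G.Adj (f u) (f v)) :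
    H.IsSetJoinCover (coverComap f 𝒟) := by
  refine ⟨?_, fun u v => ?_⟩
  · rintro _ ⟨p, ⟨-, hne⟩, rfl⟩ _ hA
    obtain ⟨K, hK, rfl⟩ := Sym2.mem_map.mp hA
    exact hne K hK
  rw [hH, h.2]
  constructor
  · rintro ⟨p, hp, K, L, rfl, hu, hv⟩
    refine ⟨s(f ⁻¹' K, f ⁻¹' L), ⟨s(K, L), ⟨hp, ?_⟩, Sym2.map_mk _ _ _⟩,
      f ⁻¹' K, f ⁻¹' L, rfl, hu, hv⟩
    intro A hA
    rcases Sym2.mem_iff.mp hA with rfl | rfl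
    exacts [⟨u, hu⟩, ⟨v, hv⟩]
  · rintro ⟨_, ⟨p, ⟨hp, -⟩, rfl⟩, A, B, hAB, hu, hv⟩
    induction p using Sym2.ind with
    | _ K L =>
      rw [Sym2.map_mk, Sym2.eq_iff] at hAB
      rcases hAB with ⟨rfl, rfl⟩ | ⟨rfl, rfl⟩
      exacts [⟨s(K, L), hp, K, L, rfl, hu, hv⟩, ⟨s(K, L), hp, L, K, Sym2.eq_swap, hu, hv⟩]

theorem comps_coverComap_subset (f : V → W) (𝒟 : Set (Sym2 (Set W))) :
    comps (coverComap f 𝒟) ⊆ (f ⁻¹' ·) '' {K ∈ comps 𝒟 | (f ⁻¹' K).Nonempty} := by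
  rintro _ ⟨_, ⟨p, ⟨hp, hne⟩, rfl⟩, hA⟩
  obtain ⟨K, hK, rfl⟩ := Sym2.mem_map.mp hA
  exact ⟨K, ⟨⟨p, hp, hK⟩, hne K hK⟩, rfl⟩

theorem coverOrder_coverComap_lt [Finite W] (f : V → W) {𝒟 : Set (Sym2 (Set W))}
    {K : Set W} (hK : K ∈ comps 𝒟) (hfK : ∀ v, f v ∉ K) :
    coverOrder (coverComap f 𝒟) < coverOrder 𝒟 := by
  have hsub : {L ∈ comps 𝒟 | (f ⁻¹' L).Nonempty} ⊂ comps 𝒟 :=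
    ⟨fun _ hL => hL.1, fun h => by obtain ⟨v, hv⟩ := (h hK).2; exact hfK v hv⟩
  calc (comps (coverComap f 𝒟)).ncard
      ≤ ((f ⁻¹' ·) '' {L ∈ comps 𝒟 | (f ⁻¹' L).Nonempty}).ncard :=
        Set.ncard_le_ncard (comps_coverComap_subset f 𝒟)
    _ ≤ {L ∈ comps 𝒟 | (f ⁻¹' L).Nonempty}.ncard := Set.ncard_image_le
    _ < (comps 𝒟).ncard := Set.ncard_lt_ncard hsub

theorem st_le_coverOrder {G : LGraph V} {𝒞 : Set (Sym2 (Set V))} (h : G.IsSetJoinCover 𝒞) :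
    G.st ≤ coverOrder 𝒞 :=
  Nat.sInf_le ⟨𝒞, h, rfl⟩

theorem exists_fin_embedding_avoiding [Finite W] {S : Set W} {n : ℕ} (h : n ≤ Sᶜ.ncard) :
    ∃ f : Fin n ↪ W, ∀ i, f i ∉ S := by
  have := Fintype.ofFinite ↥Sᶜ
  obtain ⟨g⟩ := Function.Embedding.nonempty_of_card_le (α := Fin n) (β := ↥Sᶜ) <| by
    rwa [Fintype.card_fin, ← Nat.card_eq_fintype_card, Nat.card_coe_set_eq]
  exact ⟨g.trans (Function.Embedding.subtype _), fun i => (g i).2⟩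

/-- Let `n < m` with `st₊(Kₙ) = st₊(K_m)`, and let `𝒞` be an optimal
set-join cover of `K_m`.  Then every component `K ∈ V(𝒞)` satisfies `|K| > m − n`. -/
theorem component_card_of_optimal_complete (m n : ℕ) (hnm : n < m)
    (hst : (completeGraph n).st = (completeGraph m).st)
    (𝒞 : Set (Sym2 (Set (Fin m)))) (hopt : (completeGraph m).IsOptimalCover 𝒞) :
    ∀ K ∈ comps 𝒞, m - n < K.ncard := by
  intro K hK
  by_contra! hle
  have hcompl : n ≤ Kᶜ.ncard := by
    have := Set.ncard_add_ncard_compl K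
    rw [Nat.card_fin] at this
    omega
  obtain ⟨f, hfK⟩ := exists_fin_embedding_avoiding hcompl
  have hcover : (completeGraph n).IsSetJoinCover (coverComap f 𝒞) :=
    hopt.1.comap f fun _ _ => f.injective.ne_iff.symm
  have hlt : coverOrder (coverComap f 𝒞) < (completeGraph n).st := by
    rw [hst, ← hopt.2]
    exact coverOrder_coverComap_lt f hK hfK
  exact (st_le_coverOrder hcover).not_gt hlt

end LGraph
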